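/- Assume moreover that ν({s ∈ P_m : s_i = 0 for all i ≥ 0}) = 0 and that c₀, c₁ and ν are not all zero (so that Φ(n) > 0 for every integer n ≥ 2 and Ψ(q) > 0 for every real q ≥ 2). Then the series Σ_{n≥2} 1/Φ(n) converges if and only if the integral ∫_2^∞ dq/Ψ(q) converges. -/

import Mathlib

open MeasureTheory

/-- `s ∈ P_m`: `s = (s₀,s₁,s₂,…)` with `s₀ ≥ 0`, `s₁ ≥ s₂ ≥ … ≥ 0`, and
`Σ_{i≥0} s_i ≤ 1`. -/
def MemPm (s : ℕ → ℝ) : Prop :=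
  (∀ i, 0 ≤ s i) ∧ (∀ i, 1 ≤ i → s (i + 1) ≤ s i) ∧ Summable s ∧ ∑' i, s i ≤ 1

/-- `Φ(q) = c₀q + (c₁/2)q(q−1) + ∫_{P_m} (q s₀ + Σ_{i≥1} (q s_i − 1 + (1−s_i)^q)) ν(ds)`. -/
noncomputable def Phi (c₀ c₁ : ℝ) (ν : Measure (ℕ → ℝ)) (q : ℕ) : ℝ :=
  c₀ * q + c₁ / 2 * q * ((q : ℝ) - 1)
    + ∫ s, ((q : ℝ) * s 0 + ∑' i : ℕ, ((q : ℝ) * s (i + 1) - 1 + (1 - s (i + 1)) ^ q)) ∂ν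

/-- `Ψ(q) = c₀q + (c₁/2)q² + ∫_{P_m} (q s₀ + Σ_{i≥1} (e^{−q s_i} − 1 + q s_i)) ν(ds)`. -/
noncomputable def Psi (c₀ c₁ : ℝ) (ν : Measure (ℕ → ℝ)) (q : ℝ) : ℝ :=
  c₀ * q + c₁ / 2 * q ^ 2
    + ∫ s, (q * s 0 + ∑' i : ℕ, (Real.exp (-(q * s (i + 1))) - 1 + q * s (i + 1))) ∂ν

open Real Set

/-!
On `[0, 1]` one has `(1 - x)ⁿ ≤ e^{-n x} ≤ x + (1 - x)ⁿ⁺¹`, so the integrands of `Φ` and `Ψ` compare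
termwise and `Ψ(n - 1) ≤ Φ(n) ≤ Ψ(n)`. As `Ψ` is increasing and positive, `Σ 1/Φ(n)` converges iff
`Σ 1/Ψ(n)` does, and by the integral test iff `1/Ψ` is integrable on `[2, ∞)`.
-/

lemma Real.one_sub_pow_le_exp_neg_mul {x : ℝ} (hx : x ≤ 1) (n : ℕ) :
    (1 - x) ^ n ≤ exp (-(n * x)) := by
  calc (1 - x) ^ n ≤ exp (-x) ^ n := pow_le_pow_left₀ (by linarith) (one_sub_le_exp_neg x) n
    _ = exp (-(n * x)) := by rw [← exp_nat_mul, mul_neg]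

lemma Real.exp_neg_mul_le_add_one_sub_pow {x : ℝ} (hx₀ : 0 ≤ x) (hx₁ : x ≤ 1) (n : ℕ) :
    exp (-(n * x)) ≤ x + (1 - x) ^ (n + 1) := by
  set f : ℝ → ℝ := fun x => x + (1 - x) ^ (n + 1) - exp (-(n * x))
  have hf : ∀ y, HasDerivAt f (1 - (n + 1) * (1 - y) ^ n + n * exp (-(n * y))) y := by
    intro y
    refine (((hasDerivAt_id' y).fun_add (((hasDerivAt_id' y).const_sub 1).fun_pow (n + 1))).fun_sub
      (((hasDerivAt_id' y).const_mul (n : ℝ)).fun_neg.exp)).congr_deriv ?_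
    simp only [Nat.cast_add, Nat.cast_one, add_tsub_cancel_right]
    ring
  -- `f' ≥ 1 - (1 - y) ^ n ≥ 0` on `[0, 1]`, using `(1 - y) ^ n ≤ exp (-(n * y))`
  have hmono : MonotoneOn f (Icc 0 1) := by
    refine monotoneOn_of_hasDerivWithinAt_nonneg (convex_Icc 0 1)
      (fun y _ => (hf y).continuousAt.continuousWithinAt) (fun y _ => (hf y).hasDerivWithinAt)
      fun y hy => ?_
    rw [interior_Icc] at hy
    have h₁ := Real.one_sub_pow_le_exp_neg_mul hy.2.le n
    have h₂ : (1 - y) ^ n ≤ 1 := pow_le_one₀ (by linarith [hy.2]) (by linarith [hy.1])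
    nlinarith [(Nat.cast_nonneg n : (0 : ℝ) ≤ n)]
  have := hmono ⟨le_rfl, zero_le_one⟩ ⟨hx₀, hx₁⟩ hx₀
  simp only [f, mul_zero, neg_zero, exp_zero, sub_zero, one_pow] at this
  linarith

noncomputable def expDefect (y : ℝ) : ℝ := Real.exp (-y) - 1 + y

def powDefect (n : ℕ) (x : ℝ) : ℝ := n * x - 1 + (1 - x) ^ n

lemma expDefect_nonneg (y : ℝ) : 0 ≤ expDefect y := by
  rw [expDefect]
  linarith [add_one_le_exp (-y)]

lemma expDefect_pos {y : ℝ} (hy : 0 < y) : 0 < expDefect y := by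
  rw [expDefect]
  linarith [add_one_lt_exp (x := -y) (by linarith)]

lemma expDefect_le_sq {y : ℝ} (hy : 0 ≤ y) : expDefect y ≤ y ^ 2 := by
  have h : exp (-y) * exp y = 1 := by rw [← exp_add, neg_add_cancel, exp_zero]
  rw [expDefect]
  nlinarith [add_one_le_exp y, add_one_le_exp (-y), exp_pos (-y)]

lemma expDefect_le_expDefect {a b : ℝ} (ha : 0 ≤ a) (hab : a ≤ b) :
    expDefect a ≤ expDefect b := by
  have hb : exp (-b) = exp (-a) * exp (-(b - a)) := by rw [← exp_add]; ring_nf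
  rw [expDefect, expDefect]
  nlinarith [add_one_le_exp (-(b - a)), exp_le_one_iff.2 (neg_nonpos.2 ha), exp_pos (-a)]

lemma powDefect_le_expDefect {x : ℝ} (hx : x ≤ 1) (n : ℕ) : powDefect n x ≤ expDefect (n * x) := by
  have := Real.one_sub_pow_le_exp_neg_mul hx n
  rw [powDefect, expDefect]
  linarith

lemma expDefect_le_powDefect_succ {x : ℝ} (hx₀ : 0 ≤ x) (hx₁ : x ≤ 1) (n : ℕ) :
    expDefect (n * x) ≤ powDefect (n + 1) x := by
  have := Real.exp_neg_mul_le_add_one_sub_pow hx₀ hx₁ n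
  rw [powDefect, expDefect]
  push_cast
  linarith

namespace MemPm

variable {s : ℕ → ℝ}

lemma nonneg (hs : MemPm s) (i : ℕ) : 0 ≤ s i := hs.1 i

lemma le_one (hs : MemPm s) (i : ℕ) : s i ≤ 1 :=
  (hs.2.2.1.le_tsum i fun j _ => hs.1 j).trans hs.2.2.2

lemma mem_Icc (hs : MemPm s) (i : ℕ) : s i ∈ Icc (0 : ℝ) 1 := ⟨hs.nonneg i, hs.le_one i⟩

lemma summable_sq_succ (hs : MemPm s) : Summable fun i => s (i + 1) ^ 2 :=
  .of_nonneg_of_le (fun _ => sq_nonneg _)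
    (fun _ => pow_le_of_le_one (hs.nonneg _) (hs.le_one _) two_ne_zero)
    ((summable_nat_add_iff 1).2 hs.2.2.1)

end MemPm

structure QuadraticallyBounded (u : ℝ → ℝ) : Prop where
  measurable : Measurable u
  nonneg : ∀ x ∈ Icc (0 : ℝ) 1, 0 ≤ u x
  le_sq : ∃ C, ∀ x ∈ Icc (0 : ℝ) 1, u x ≤ C * x ^ 2

structure IsPmIntegrable (ν : Measure (ℕ → ℝ)) : Prop where
  ae_memPm : ∀ᵐ s ∂ν, MemPm s
  lintegral_ne_top : ∫⁻ s, ENNReal.ofReal (s 0 + ∑' i : ℕ, (s (i + 1)) ^ 2) ∂ν ≠ ⊤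

noncomputable def jumpIntegral (ν : Measure (ℕ → ℝ)) (q : ℝ) (u : ℝ → ℝ) : ℝ :=
  ∫ s, (q * s 0 + ∑' i, u (s (i + 1))) ∂ν

namespace QuadraticallyBounded

variable {u : ℝ → ℝ} {s : ℕ → ℝ}

lemma summable (hu : QuadraticallyBounded u) (hs : MemPm s) :
    Summable fun i => u (s (i + 1)) := by
  obtain ⟨C, hC⟩ := hu.le_sq
  exact .of_nonneg_of_le (fun _ => hu.nonneg _ (hs.mem_Icc _)) (fun _ => hC _ (hs.mem_Icc _))
    (hs.summable_sq_succ.mul_left C)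

lemma tsum_nonneg (hu : QuadraticallyBounded u) (hs : MemPm s) :
    0 ≤ ∑' i, u (s (i + 1)) :=
  _root_.tsum_nonneg fun _ => hu.nonneg _ (hs.mem_Icc _)

lemma aestronglyMeasurable {ν : Measure (ℕ → ℝ)} (hν : ∀ᵐ s ∂ν, MemPm s)
    (hu : QuadraticallyBounded u) (q : ℝ) :
    AEStronglyMeasurable (fun s : ℕ → ℝ => q * s 0 + ∑' i, u (s (i + 1))) ν := by
  have hum := hu.measurable
  refine ((measurable_pi_apply 0).const_mul q).aestronglyMeasurable.add
    (aestronglyMeasurable_of_tendsto_ae Filter.atTop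
      (f := fun n (s : ℕ → ℝ) => ∑ i ∈ Finset.range n, u (s (i + 1)))
      (fun n => Measurable.aestronglyMeasurable (by fun_prop)) ?_)
  filter_upwards [hν] with s hs
  exact (hu.summable hs).hasSum.tendsto_sum_nat

end QuadraticallyBounded

lemma quadraticallyBounded_sq : QuadraticallyBounded fun x : ℝ => x ^ 2 :=
  ⟨measurable_id.pow_const 2, fun x _ => sq_nonneg x, 1, fun _ _ => (one_mul _).ge⟩

namespace IsPmIntegrable

variable {ν : Measure (ℕ → ℝ)} {u v : ℝ → ℝ}

lemma integrable_weight (hν : IsPmIntegrable ν) :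
    Integrable (fun s : ℕ → ℝ => s 0 + ∑' i, s (i + 1) ^ 2) ν := by
  refine ⟨by simpa using quadraticallyBounded_sq.aestronglyMeasurable hν.ae_memPm 1, ?_⟩
  rw [hasFiniteIntegral_iff_ofReal]
  · exact hν.lintegral_ne_top.lt_top
  · filter_upwards [hν.ae_memPm] with s hs
    exact add_nonneg (hs.nonneg 0) (quadraticallyBounded_sq.tsum_nonneg hs)

lemma integrable (hν : IsPmIntegrable ν) (hu : QuadraticallyBounded u) (q : ℝ) :
    Integrable (fun s : ℕ → ℝ => q * s 0 + ∑' i, u (s (i + 1))) ν := by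
  obtain ⟨C, hC⟩ := hu.le_sq
  refine (hν.integrable_weight.const_mul (|q| + |C|)).mono'
    (hu.aestronglyMeasurable hν.ae_memPm q) ?_
  filter_upwards [hν.ae_memPm] with s hs
  have hsum : ∑' i, u (s (i + 1)) ≤ |C| * ∑' i, s (i + 1) ^ 2 := by
    rw [← tsum_mul_left]
    exact (hu.summable hs).tsum_le_tsum
      (fun _ => (hC _ (hs.mem_Icc _)).trans (by gcongr; exact le_abs_self C))
      (hs.summable_sq_succ.mul_left _)
  have h0 := hs.nonneg 0
  have hsq := quadraticallyBounded_sq.tsum_nonneg hs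
  rw [Real.norm_eq_abs, abs_le]
  constructor <;> nlinarith [neg_abs_le q, le_abs_self q, abs_nonneg C, hu.tsum_nonneg hs]

lemma jumpIntegral_mono (hν : IsPmIntegrable ν) (hu : QuadraticallyBounded u)
    (hv : QuadraticallyBounded v) {a b : ℝ} (hab : a ≤ b) (huv : ∀ x ∈ Icc (0 : ℝ) 1, u x ≤ v x) :
    jumpIntegral ν a u ≤ jumpIntegral ν b v := by
  refine integral_mono_ae (hν.integrable hu a) (hν.integrable hv b) ?_
  filter_upwards [hν.ae_memPm] with s hs
  exact add_le_add (mul_le_mul_of_nonneg_right hab (hs.nonneg 0))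
    ((hu.summable hs).tsum_le_tsum (fun i => huv _ (hs.mem_Icc _)) (hv.summable hs))

lemma jumpIntegral_nonneg (hν : IsPmIntegrable ν) (hu : QuadraticallyBounded u) {q : ℝ}
    (hq : 0 ≤ q) : 0 ≤ jumpIntegral ν q u :=
  integral_nonneg_of_ae <| by
    filter_upwards [hν.ae_memPm] with s hs
    exact add_nonneg (mul_nonneg hq (hs.nonneg 0)) (hu.tsum_nonneg hs)

lemma jumpIntegral_pos (hν : IsPmIntegrable ν) (hzero : ν {s | ∀ i, s i = 0} = 0) (hν₀ : ν ≠ 0)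
    (hu : QuadraticallyBounded u) (hu₀ : ∀ x ∈ Ioc (0 : ℝ) 1, 0 < u x) {q : ℝ} (hq : 0 < q) :
    0 < jumpIntegral ν q u := by
  have hpos : ∀ᵐ s ∂ν, 0 < q * s 0 + ∑' i, u (s (i + 1)) := by
    filter_upwards [hν.ae_memPm, measure_eq_zero_iff_ae_notMem.1 hzero] with s hs hs₀
    obtain ⟨i, hi⟩ := not_forall.1 hs₀
    have hi : 0 < s i := (hs.nonneg i).lt_of_ne' hi
    rcases i with _ | j
    · exact add_pos_of_pos_of_nonneg (mul_pos hq hi) (hu.tsum_nonneg hs)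
    · refine add_pos_of_nonneg_of_pos (mul_nonneg hq.le (hs.nonneg 0)) ?_
      exact (hu₀ _ ⟨hi, hs.le_one _⟩).trans_le
        ((hu.summable hs).le_tsum j fun k _ => hu.nonneg _ (hs.mem_Icc _))
  rw [jumpIntegral, integral_pos_iff_support_of_nonneg_ae (hpos.mono fun _ h => h.le)
    (hν.integrable hu q)]
  have hsupp : Function.support (fun s : ℕ → ℝ => q * s 0 + ∑' i, u (s (i + 1))) =ᵐ[ν] univ :=
    ae_eq_univ.2 (mem_ae_iff.1 (hpos.mono fun _ h => h.ne'))
  rw [measure_congr hsupp]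
  exact Measure.measure_univ_pos.2 hν₀

end IsPmIntegrable

lemma quadraticallyBounded_expDefect {q : ℝ} (hq : 0 ≤ q) :
    QuadraticallyBounded fun x => expDefect (q * x) where
  measurable := by unfold expDefect; fun_prop
  nonneg _ _ := expDefect_nonneg _
  le_sq := ⟨q ^ 2, fun x hx => (expDefect_le_sq (mul_nonneg hq hx.1)).trans_eq (mul_pow q x 2)⟩

lemma quadraticallyBounded_powDefect (n : ℕ) : QuadraticallyBounded (powDefect n) where
  measurable := by unfold powDefect; fun_prop
  nonneg x hx := by
    have := one_add_mul_le_pow (a := -x) (by linarith [hx.2]) n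
    rw [← sub_eq_add_neg, mul_neg] at this
    rw [powDefect]
    linarith
  le_sq := ⟨(n : ℝ) ^ 2, fun x hx => (powDefect_le_expDefect hx.2 n).trans <|
    (expDefect_le_sq (mul_nonneg n.cast_nonneg hx.1)).trans_eq (mul_pow _ x 2)⟩

section PhiPsi

variable {c₀ c₁ : ℝ} {ν : Measure (ℕ → ℝ)}

lemma Phi_eq (n : ℕ) :
    Phi c₀ c₁ ν n = c₀ * n + c₁ / 2 * n * ((n : ℝ) - 1) + jumpIntegral ν n (powDefect n) := rfl

lemma Psi_eq (q : ℝ) :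
    Psi c₀ c₁ ν q = c₀ * q + c₁ / 2 * q ^ 2 + jumpIntegral ν q (fun x => expDefect (q * x)) := rfl

lemma Psi_le_Psi (hc₀ : 0 ≤ c₀) (hc₁ : 0 ≤ c₁) (hν : IsPmIntegrable ν) {p q : ℝ} (hp : 0 ≤ p)
    (hpq : p ≤ q) : Psi c₀ c₁ ν p ≤ Psi c₀ c₁ ν q := by
  have hI := hν.jumpIntegral_mono (quadraticallyBounded_expDefect hp)
    (quadraticallyBounded_expDefect (hp.trans hpq)) hpq fun x hx =>
      expDefect_le_expDefect (mul_nonneg hp hx.1) (mul_le_mul_of_nonneg_right hpq hx.1)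
  rw [Psi_eq, Psi_eq]
  gcongr

lemma Phi_le_Psi (hc₁ : 0 ≤ c₁) (hν : IsPmIntegrable ν) (n : ℕ) :
    Phi c₀ c₁ ν n ≤ Psi c₀ c₁ ν n := by
  have hI := hν.jumpIntegral_mono (quadraticallyBounded_powDefect n)
    (quadraticallyBounded_expDefect n.cast_nonneg) (le_refl (n : ℝ))
    fun x hx => powDefect_le_expDefect hx.2 n
  rw [Phi_eq, Psi_eq]
  refine add_le_add (add_le_add le_rfl ?_) hI
  rw [mul_assoc]
  gcongr
  nlinarith

lemma Psi_le_Phi_succ (hc₀ : 0 ≤ c₀) (hc₁ : 0 ≤ c₁) (hν : IsPmIntegrable ν) (n : ℕ) :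
    Psi c₀ c₁ ν n ≤ Phi c₀ c₁ ν (n + 1) := by
  have hI := hν.jumpIntegral_mono (quadraticallyBounded_expDefect n.cast_nonneg)
    (quadraticallyBounded_powDefect (n + 1)) (Nat.cast_le.2 n.le_succ)
    fun x hx => expDefect_le_powDefect_succ hx.1 hx.2 n
  rw [Phi_eq, Psi_eq]
  refine add_le_add (add_le_add ?_ ?_) hI
  · gcongr
    exact Nat.cast_le.2 n.le_succ
  · rw [mul_assoc]
    gcongr
    push_cast
    nlinarith

lemma Psi_pos (hc₀ : 0 ≤ c₀) (hc₁ : 0 ≤ c₁) (hν : IsPmIntegrable ν)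
    (hzero : ν {s | ∀ i, s i = 0} = 0) (hnontriv : ¬(c₀ = 0 ∧ c₁ = 0 ∧ ν = 0)) {q : ℝ}
    (hq : 0 < q) : 0 < Psi c₀ c₁ ν q := by
  have hI := hν.jumpIntegral_nonneg (quadraticallyBounded_expDefect hq.le) hq.le
  rw [Psi_eq]
  rcases hc₀.lt_or_eq with hc₀ | rfl
  · positivity
  rcases hc₁.lt_or_eq with hc₁ | rfl
  · positivity
  have hν₀ : ν ≠ 0 := fun h => hnontriv ⟨rfl, rfl, h⟩
  simpa using hν.jumpIntegral_pos hzero hν₀ (quadraticallyBounded_expDefect hq.le)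
    (fun x hx => expDefect_pos (mul_pos hq hx.1)) hq

end PhiPsi

lemma summable_iff_summable_succ_of_le_of_le {f g : ℕ → ℝ} (hf : ∀ n, 0 ≤ f (n + 1))
    (hfg : ∀ n, f (n + 1) ≤ g n) (hgf : ∀ n, g n ≤ f n) :
    Summable g ↔ Summable fun n => f (n + 1) :=
  ⟨fun h => .of_nonneg_of_le hf hfg h, fun h =>
    .of_nonneg_of_le (fun n => (hf n).trans (hfg n)) hgf ((summable_nat_add_iff 1).1 h)⟩

theorem AntitoneOn.summable_comp_add_iff_integrableOn_Ici {f : ℝ → ℝ} (N : ℕ)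
    (anti : AntitoneOn f (Ici N)) (nonneg : ∀ t ∈ Ioi (N : ℝ), 0 ≤ f t) :
    Summable (fun n : ℕ => f (n + N : ℕ)) ↔ IntegrableOn f (Ici N) := by
  rw [integrableOn_Ici_iff_integrableOn_Ioi]
  exact ⟨(anti.integrableOn_Ioi_of_summable_comp_add · nonneg),
    fun h => (summable_nat_add_iff N).2 (anti.summable_of_integrableOn_Ioi h nonneg)⟩

/-- Let `c₀, c₁ ≥ 0` and let `ν` be a measure carried on `P_m` with
`∫ (s₀ + Σ_{i≥1} s_i²) ν(ds) < ∞`.  Assume moreover that `ν` gives no mass to the zero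
sequence and that `c₀`, `c₁` and `ν` are not all zero (so that `Φ(n) > 0` for every
integer `n ≥ 2` and `Ψ(q) > 0` for every real `q ≥ 2`).  Then the series
`Σ_{n≥2} 1/Φ(n)` converges if and only if the integral `∫_2^∞ dq/Ψ(q)` converges. -/
theorem Phi_series_iff_Psi_integral
    (c₀ c₁ : ℝ) (hc₀ : 0 ≤ c₀) (hc₁ : 0 ≤ c₁)
    (ν : Measure (ℕ → ℝ)) (hν : ν {s | ¬ MemPm s} = 0)
    (hint : ∫⁻ s, ENNReal.ofReal (s 0 + ∑' i : ℕ, (s (i + 1)) ^ 2) ∂ν ≠ ⊤)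
    (hzero : ν {s | ∀ i, s i = 0} = 0)
    (hnontriv : ¬(c₀ = 0 ∧ c₁ = 0 ∧ ν = 0)) :
    (Summable fun n : ℕ => 1 / Phi c₀ c₁ ν (n + 2)) ↔
      IntegrableOn (fun q : ℝ => 1 / Psi c₀ c₁ ν q) (Set.Ici 2) volume := by
  have hν' : IsPmIntegrable ν := ⟨hν, hint⟩
  have hpos : ∀ q : ℝ, 0 < q → 0 < Psi c₀ c₁ ν q := fun q hq =>
    Psi_pos hc₀ hc₁ hν' hzero hnontriv hq
  have hanti : AntitoneOn (fun q => 1 / Psi c₀ c₁ ν q) (Ioi 0) := fun p hp q _ hpq =>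
    one_div_le_one_div_of_le (hpos p hp) (Psi_le_Psi hc₀ hc₁ hν' (le_of_lt hp) hpq)
  have hPhi : ∀ n : ℕ, Psi c₀ c₁ ν (n + 1 : ℕ) ≤ Phi c₀ c₁ ν (n + 2) :=
    fun n => Psi_le_Phi_succ hc₀ hc₁ hν' (n + 1)
  rw [summable_iff_summable_succ_of_le_of_le (f := fun n : ℕ => 1 / Psi c₀ c₁ ν (n + 1 : ℕ))
    (fun n => (one_div_pos.2 (hpos _ (by positivity))).le)
    (fun n => one_div_le_one_div_of_le ((hpos _ (by positivity)).trans_le (hPhi n))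
      (Phi_le_Psi hc₁ hν' (n + 2)))
    (fun n => one_div_le_one_div_of_le (hpos _ (by positivity)) (hPhi n))]
  have htest := (hanti.mono (Ici_subset_Ioi.2 (by norm_num))).summable_comp_add_iff_integrableOn_Ici
    2 fun t ht => (one_div_pos.2 (hpos t (lt_trans (by norm_num) ht))).le
  rwa [Nat.cast_ofNat] at htest
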